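/- For every nonzero quaternion q and every real number s, the quaternion T₊(q)(s) = (|q|⁴ − s² + 2s·q̄·i·q)/(|q|⁴ + s²) has norm 1. -/

import Mathlib

/-- The standard imaginary unit quaternion `i`. -/
noncomputable def qi : Quaternion ℝ := ⟨0, 1, 0, 0⟩

/-- The path lift `T₊(q)(s)` of the clutching function of `FS⁵`. -/
noncomputable def Tplus (q : Quaternion ℝ) (s : ℝ) : Quaternion ℝ :=
  (((‖q‖ ^ 4 - s ^ 2 : ℝ) : Quaternion ℝ) + 2 * (s : Quaternion ℝ) * star q * qi * q) /
    ((‖q‖ ^ 4 + s ^ 2 : ℝ) : Quaternion ℝ)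

/-!
Since `Re (x y) = Re (y x)`, `Re (q̄ i q) = Re (i q q̄) = |q|² Re i = 0`, so `q̄ i q` is purely
imaginary; its norm is `|q|²`. Hence, with `c = |q|²`, the numerator of `T₊(q)(s)` is the real
number `c² - s²` plus an orthogonal purely imaginary quaternion of norm `2|s|c`, and Pythagoras
gives its norm `√((c² - s²)² + 4s²c²) = c² + s²`, which is the denominator.
-/

namespace Quaternion

theorem re_mul_comm (a b : Quaternion ℝ) : (a * b).re = (b * a).re := by
  simp only [re_mul]
  ring

theorem re_star_mul_mul (q a : Quaternion ℝ) : (star q * a * q).re = normSq q * a.re := by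
  rw [re_mul_comm, ← mul_assoc, self_mul_star, coe_mul_eq_smul, re_smul, smul_eq_mul]

theorem norm_star_mul_mul (q a : Quaternion ℝ) : ‖star q * a * q‖ = ‖q‖ ^ 2 * ‖a‖ := by
  rw [norm_mul, norm_mul, norm_star]
  ring

theorem norm_coe_add_coe_mul_sq {u : Quaternion ℝ} (hu : u.re = 0) (a b : ℝ) :
    ‖(a : Quaternion ℝ) + (b : Quaternion ℝ) * u‖ ^ 2 = a ^ 2 + b ^ 2 * ‖u‖ ^ 2 := by
  have horth : inner ℝ (a : Quaternion ℝ) ((b : Quaternion ℝ) * u) = 0 := by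
    simp [inner_def, hu]
  rw [norm_add_sq_real, horth, norm_mul, norm_coe, norm_coe, Real.norm_eq_abs,
    Real.norm_eq_abs, mul_pow, sq_abs, sq_abs, mul_zero, add_zero]

end Quaternion

open Quaternion

theorem re_qi : qi.re = 0 := rfl

theorem norm_qi : ‖qi‖ = 1 := by
  rw [norm_eq_sqrt_real_inner, inner_self, normSq_def']
  simp [qi]

theorem Tplus_norm_one (q : Quaternion ℝ) (hq : q ≠ 0) (s : ℝ) : ‖Tplus q s‖ = 1 := by
  have hre : (star q * qi * q).re = 0 := by rw [re_star_mul_mul, re_qi, mul_zero]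
  have hnorm : ‖star q * qi * q‖ = ‖q‖ ^ 2 := by rw [norm_star_mul_mul, norm_qi, mul_one]
  have hden : 0 < ‖q‖ ^ 4 + s ^ 2 := by
    have := norm_pos_iff.mpr hq
    positivity
  have hnum : 2 * (s : Quaternion ℝ) * star q * qi * q =
      ((2 * s : ℝ) : Quaternion ℝ) * (star q * qi * q) := by
    rw [coe_mul]
    simp only [mul_assoc]
    norm_cast
  rw [Tplus, norm_div, norm_coe, Real.norm_of_nonneg hden.le, div_eq_one_iff_eq hden.ne',
    ← pow_left_inj₀ (norm_nonneg _) hden.le two_ne_zero, hnum, norm_coe_add_coe_mul_sq hre,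
    hnorm]
  ring
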